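/- Let t > 2 and let G = D_{4t} = ⟨a, b : a^{2t} = b² = 1, bab = a^{−1}⟩, with elements indexed by g_k = a^{k−1} for 1 ≤ k ≤ 2t and g_k = a^{k−2t−1}b for 2t+1 ≤ k ≤ 4t. Let ρ : G × G → {1,−1} be defined on indices by: ρ(g_i,g_j) = 1 iff i + j ≤ 2t+1, for i,j ≤ 2t; ρ(g_i,g_j) = 1 iff i + (j−2t) ≤ 2t+1, for i ≤ 2t < j; ρ(g_i,g_j) = 1 iff j ≤ i−2t, for j ≤ 2t < i; and ρ(g_i,g_j) = −1 iff j ≤ i, for i,j > 2t (so the matrix of ρ is the block matrix [[A,A],[B,−B]] with A_{i,j} = 1 iff i+j ≤ 2t+1 and B_{i,j} = 1 iff j ≤ i). Let S = {g_k : 2 ≤ k ≤ 4t−2} = G ∖ {1, a^{2t−2}b, a^{2t−1}b}. In ℚ[x_d : d ∈ S], let J be the ideal generated by x_d² − x_d for all d ∈ S together with, for each s ∈ {2, 3, …, t}, the polynomial Σ_{h∈G} ρ(g_s,h) · ∏_{d ∈ S ∩ {h, g_s·h}} (1 − 2x_d). Then a point a : S → ℚ lies in the affine variety V(J) if and only if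 a_d ∈ {0,1} for every d ∈ S and the cocyclic matrix of ψ(g,h) = ρ(g,h)·∏_{d∈S} ∂_d(g,h)^{a_d} is Hadamard. -/

import Mathlib

open Matrix MvPolynomial

/-- The characteristic map `δ_d`. -/
def charMap {G : Type*} [DecidableEq G] (d x : G) : ℤ := if x = d then -1 else 1

/-- The elementary coboundary `∂_d`. -/
def elemCob {G : Type*} [Group G] [DecidableEq G] (d g h : G) : ℤ :=
  charMap d g * charMap d h * charMap d (g * h)

/-- The ordering `g_k` of `D_{4t}`: `g_k = a^{k-1}` for `1 ≤ k ≤ 2t` and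
`g_k = a^{k-2t-1}·b` for `2t+1 ≤ k ≤ 4t`, where `a = r 1` and `b = sr 0`. -/
def dihEl (t k : ℕ) : DihedralGroup (2 * t) :=
  if k ≤ 2 * t then DihedralGroup.r ((k - 1 : ℕ) : ZMod (2 * t))
  else DihedralGroup.r ((k - 2 * t - 1 : ℕ) : ZMod (2 * t)) * DihedralGroup.sr 0

/-- The index `k ∈ {1,…,4t}` of a dihedral group element in the above ordering
(`a^m = r m` has index `m+1`; `a^m·b = sr (-m)` has index `2t+m+1`). -/
def dihIdx {t : ℕ} : DihedralGroup (2 * t) → ℕ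
  | DihedralGroup.r i => i.val + 1
  | DihedralGroup.sr j => 2 * t + (-j).val + 1

/-- The entries of the block matrix `[[A,A],[B,−B]]`, where `A_{i,j} = 1` iff
`i+j ≤ 2t+1` and `B_{i,j} = 1` iff `j ≤ i`, read through the indexing of `D_{4t}`. -/
def rhoIdxD (t i j : ℕ) : ℤ :=
  if i ≤ 2 * t then
    (if j ≤ 2 * t then (if i + j ≤ 2 * t + 1 then 1 else -1)
     else (if i + (j - 2 * t) ≤ 2 * t + 1 then 1 else -1))
  else
    (if j ≤ 2 * t then (if j ≤ i - 2 * t then 1 else -1)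
     else (if j ≤ i then -1 else 1))

/-- The fixed representative cocycle `ρ = β₂·β₃` over `D_{4t}`. -/
def rhoD (t : ℕ) (g h : DihedralGroup (2 * t)) : ℤ := rhoIdxD t (dihIdx g) (dihIdx h)

/-- The coboundary index set `S = G ∖ {1, a^{2t−2}b, a^{2t−1}b}`. -/
def SD (t : ℕ) [NeZero (2 * t)] : Finset (DihedralGroup (2 * t)) :=
  Finset.univ \ {(1 : DihedralGroup (2 * t)),
    DihedralGroup.r ((2 * t - 2 : ℕ) : ZMod (2 * t)) * DihedralGroup.sr 0,
    DihedralGroup.r ((2 * t - 1 : ℕ) : ZMod (2 * t)) * DihedralGroup.sr 0}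

/-- The row polynomial `Σ_{h∈G} ρ(g_s,h) · ∏_{d ∈ S ∩ {h, g_s·h}} (1 - 2x_d)`. -/
noncomputable def rowPolyD (t : ℕ) [NeZero (2 * t)] (s : ℕ) :
    MvPolynomial {d : DihedralGroup (2 * t) // d ∈ SD t} ℚ :=
  ∑ h : DihedralGroup (2 * t), MvPolynomial.C ((rhoD t (dihEl t s) h : ℤ) : ℚ) *
    ∏ d : {d : DihedralGroup (2 * t) // d ∈ SD t},
      if (d : DihedralGroup (2 * t)) = h ∨ (d : DihedralGroup (2 * t)) = dihEl t s * h then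
        (1 - 2 * MvPolynomial.X d) else 1

/-- The ideal `J_{D_{4t}}` of Theorem 5. -/
noncomputable def idealD (t : ℕ) [NeZero (2 * t)] :
    Ideal (MvPolynomial {d : DihedralGroup (2 * t) // d ∈ SD t} ℚ) :=
  Ideal.span
    ({p | ∃ d : {d : DihedralGroup (2 * t) // d ∈ SD t},
        p = MvPolynomial.X d ^ 2 - MvPolynomial.X d} ∪
     {p | ∃ s : ℕ, 2 ≤ s ∧ s ≤ t ∧ p = rowPolyD t s})

/-!
Write `f = ∏_{a_d = 1} δ_d`, so that `ψ = ρ · ∂f`. Both `ρ` and every `∂_d` are binary cocycles,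
hence so is `ψ`, and for a binary cocycle the cocycle identity gives
`Σ_h ψ(g,h) ψ(g',h) = ψ(q,g') Σ_h ψ(q,h)` with `q = g g'⁻¹`: `M_ψ` is Hadamard iff every row
`g ≠ 1` sums to zero. That row sum is `f(g) · T(g)` with `T(g) = Σ_h ρ(g,h) f(h) f(gh)`, and at a
`{0,1}`-point `T(g_s)` is the value of the row polynomial of `g_s`. Finally `ρ(g⁻¹, gh) = -ρ(g,h)`
for `g ≠ 1`, so `T(g⁻¹) = -T(g)`: involutions have `T = 0`, and the remaining rows come in pairs
`a^m, a^{-m}`, of which `g_2, …, g_t` list one from each pair.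
-/

section BinaryCocycle

variable {G : Type*} [Group G]

structure IsBinaryCocycle (ψ : G → G → ℤ) : Prop where
  sign : ∀ g h, ψ g h = 1 ∨ ψ g h = -1
  cocycle : ∀ g h k, ψ g h * ψ (g * h) k = ψ h k * ψ g (h * k)

namespace IsBinaryCocycle

variable {ψ φ : G → G → ℤ}

lemma mul_self (hψ : IsBinaryCocycle ψ) (g h : G) : ψ g h * ψ g h = 1 := by
  rcases hψ.sign g h with e | e <;> simp [e]

lemma ne_zero (hψ : IsBinaryCocycle ψ) (g h : G) : ψ g h ≠ 0 := by
  rcases hψ.sign g h with e | e <;> simp [e]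

lemma mul (hψ : IsBinaryCocycle ψ) (hφ : IsBinaryCocycle φ) : IsBinaryCocycle (ψ * φ) where
  sign g h := by
    rcases hψ.sign g h with e | e <;> rcases hφ.sign g h with e' | e' <;> simp [e, e']
  cocycle g h k := by
    simp only [Pi.mul_apply]
    linear_combination (φ g h * φ (g * h) k) * hψ.cocycle g h k +
      (ψ h k * ψ g (h * k)) * hφ.cocycle g h k

lemma one : IsBinaryCocycle (1 : G → G → ℤ) where
  sign _ _ := Or.inl rfl
  cocycle _ _ _ := rfl

lemma prod {ι : Type*} (s : Finset ι) {ψ : ι → G → G → ℤ}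
    (hψ : ∀ i ∈ s, IsBinaryCocycle (ψ i)) : IsBinaryCocycle (∏ i ∈ s, ψ i) :=
  Finset.prod_induction _ _ (fun _ _ => mul) one hψ

variable [Fintype G]

lemma sum_mul_eq (hψ : IsBinaryCocycle ψ) (g g' : G) :
    ∑ h, ψ g h * ψ g' h = ψ (g * g'⁻¹) g' * ∑ h, ψ (g * g'⁻¹) h := by
  set q := g * g'⁻¹
  have hq : q * g' = g := inv_mul_cancel_right g g'
  have key : ∀ h, ψ g h * ψ g' h = ψ q g' * ψ q (g' * h) := fun h => by
    have hc := hψ.cocycle q g' h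
    rw [hq] at hc
    linear_combination (ψ q g' * ψ g' h) * hc - (ψ g h * ψ g' h) * hψ.mul_self q g' +
      (ψ q g' * ψ q (g' * h)) * hψ.mul_self g' h
  rw [Finset.sum_congr rfl fun h _ => key h, ← Finset.mul_sum]
  exact congrArg _ (Equiv.sum_comp (Equiv.mulLeft g') (ψ q))

variable [DecidableEq G]

theorem mul_transpose_eq_iff (hψ : IsBinaryCocycle ψ) :
    of ψ * (of ψ)ᵀ = (Fintype.card G : ℤ) • (1 : Matrix G G ℤ) ↔
      ∀ g, g ≠ 1 → ∑ h, ψ g h = 0 := by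
  have entry : ∀ g g', (of ψ * (of ψ)ᵀ) g g' = ∑ h, ψ g h * ψ g' h := fun g g' => by
    simp [Matrix.mul_apply]
  constructor
  · intro hM g hg
    have h1 := entry g 1
    rw [hM, sum_mul_eq hψ, inv_one, mul_one] at h1
    simpa [hg, Matrix.one_apply, hψ.ne_zero g 1] using h1
  · intro hrows
    ext g g'
    rw [entry]
    by_cases hgg : g = g'
    · subst hgg
      simp [hψ.mul_self]
    · rw [sum_mul_eq hψ, hrows _ (mul_inv_eq_one.not.mpr hgg)]
      simp [hgg]

end IsBinaryCocycle

lemma isBinaryCocycle_elemCob [DecidableEq G] (d : G) : IsBinaryCocycle (elemCob d) := by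
  have sq : ∀ x, charMap d x * charMap d x = 1 := fun x => by unfold charMap; split_ifs <;> rfl
  refine ⟨fun g h => ?_, fun g h k => ?_⟩
  · unfold elemCob charMap
    split_ifs <;> simp
  · unfold elemCob
    rw [← mul_assoc g h k]
    linear_combination (charMap d g * charMap d h * charMap d k * charMap d (g * h * k)) *
      (sq (g * h) - sq (h * k))

end BinaryCocycle

section TwistedRowSum

variable {G : Type*} [Group G] [Fintype G]

def twistedRowSum (ρ : G → G → ℤ) (f : G → ℤ) (g : G) : ℤ :=
  ∑ h, ρ g h * (f h * f (g * h))

variable (ρ : G → G → ℤ) (f : G → ℤ)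

lemma sum_mul_coboundary (g : G) :
    ∑ h, ρ g h * (f g * f h * f (g * h)) = f g * twistedRowSum ρ f g := by
  rw [twistedRowSum, Finset.mul_sum]
  exact Finset.sum_congr rfl fun h _ => by ring

variable {ρ}

lemma twistedRowSum_inv {g : G} (hρ : ∀ h, ρ g⁻¹ (g * h) = -ρ g h) :
    twistedRowSum ρ f g⁻¹ = -twistedRowSum ρ f g := by
  rw [twistedRowSum, ← Equiv.sum_comp (Equiv.mulLeft g), twistedRowSum, ← Finset.sum_neg_distrib]
  refine Finset.sum_congr rfl fun h _ => ?_
  rw [Equiv.coe_mulLeft, inv_mul_cancel_left, hρ]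
  ring

lemma twistedRowSum_eq_zero_of_inv_eq {g : G} (hρ : ∀ h, ρ g⁻¹ (g * h) = -ρ g h)
    (hg : g⁻¹ = g) : twistedRowSum ρ f g = 0 := by
  have := twistedRowSum_inv f hρ
  rw [hg] at this
  omega

end TwistedRowSum

section CharMapProd

variable {G : Type*} [DecidableEq G] {S : Finset G} (a : S → ℚ)

def charMapProd (x : G) : ℤ := ∏ d : S, if a d = 1 then charMap (d : G) x else 1

lemma charMapProd_ne_zero (x : G) : charMapProd a x ≠ 0 :=
  Finset.prod_ne_zero_iff.mpr fun d _ => by unfold charMap; split_ifs <;> simp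

lemma prod_elemCob_eq [Group G] (g h : G) :
    ∏ d : S, (if a d = 1 then elemCob (d : G) g h else 1) =
      charMapProd a g * charMapProd a h * charMapProd a (g * h) := by
  simp only [charMapProd, ← Finset.prod_mul_distrib]
  exact Finset.prod_congr rfl fun d _ => by rw [elemCob]; split_ifs <;> ring

lemma IsBinaryCocycle.mul_prod_elemCob [Group G] {ρ : G → G → ℤ} (hρ : IsBinaryCocycle ρ) :
    IsBinaryCocycle fun g h => ρ g h * ∏ d : S, if a d = 1 then elemCob (d : G) g h else 1 := by
  have hprod : IsBinaryCocycle (∏ d : S, if a d = 1 then elemCob (d : G) else 1) :=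
    IsBinaryCocycle.prod _ fun d _ => by
      split_ifs
      exacts [isBinaryCocycle_elemCob _, IsBinaryCocycle.one]
  convert hρ.mul hprod using 1
  ext g h
  simp only [Pi.mul_apply, Finset.prod_apply, apply_ite (fun f : G → G → ℤ => f g h),
    Pi.one_apply]

variable {a}

lemma prod_ite_eq_charMapProd (ha : ∀ d, a d = 0 ∨ a d = 1) (x : G) :
    ∏ d : S, (if (d : G) = x then 1 - 2 * a d else 1) = (charMapProd a x : ℚ) := by
  rw [charMapProd, Int.cast_prod]
  refine Finset.prod_congr rfl fun d _ => ?_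
  rcases ha d with h | h <;> simp only [h, charMap, eq_comm] <;> split_ifs <;> norm_num at *

lemma eval_prod_ite_or (ha : ∀ d, a d = 0 ∨ a d = 1) {x y : G} (hxy : x ≠ y) :
    eval a (∏ d : S, if (d : G) = x ∨ (d : G) = y then 1 - 2 * X d else 1) =
      (charMapProd a x * charMapProd a y : ℤ) := by
  have split : ∀ d : S, eval a (if (d : G) = x ∨ (d : G) = y then 1 - 2 * X d else 1) =
      (if (d : G) = x then 1 - 2 * a d else 1) * (if (d : G) = y then 1 - 2 * a d else 1) :=
    fun d => by
      by_cases hx : (d : G) = x <;> by_cases hy : (d : G) = y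
      · exact absurd (hx.symm.trans hy) hxy
      · rw [if_pos (Or.inl hx), if_pos hx, if_neg hy, mul_one]; simp
      · rw [if_pos (Or.inr hy), if_neg hx, if_pos hy, one_mul]; simp
      · rw [if_neg (not_or.mpr ⟨hx, hy⟩), if_neg hx, if_neg hy, map_one, mul_one]
  rw [map_prod, Finset.prod_congr rfl fun d _ => split d, Finset.prod_mul_distrib,
    prod_ite_eq_charMapProd ha, prod_ite_eq_charMapProd ha]
  push_cast; rfl

end CharMapProd

namespace ZMod

variable {n : ℕ} [NeZero n]

lemma val_add_cases (i j : ZMod n) :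
    (i + j).val = i.val + j.val ∨ (i + j).val + n = i.val + j.val := by
  rcases Nat.lt_or_ge (i.val + j.val) n with h | h
  · exact Or.inl (val_add_of_lt h)
  · exact Or.inr (by rw [val_add_of_le h]; omega)

lemma val_neg_cases (i : ZMod n) : ((-i).val = 0 ∧ i.val = 0) ∨ (-i).val + i.val = n := by
  have h := val_add_cases (-i) i
  rw [neg_add_cancel, val_zero] at h
  omega

end ZMod

namespace DihedralGroup

variable {t : ℕ} [NeZero (2 * t)]

lemma rhoD_r_r (i j : ZMod (2 * t)) :
    rhoD t (r i) (r j) = if i.val + j.val < 2 * t then 1 else -1 := by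
  have := ZMod.val_lt i; have := ZMod.val_lt j
  simp only [rhoD, dihIdx, rhoIdxD]
  split_ifs <;> omega

lemma rhoD_r_sr (i j : ZMod (2 * t)) :
    rhoD t (r i) (sr j) = if i.val + (-j).val < 2 * t then 1 else -1 := by
  have := ZMod.val_lt i; have := ZMod.val_lt (-j)
  simp only [rhoD, dihIdx, rhoIdxD]
  split_ifs <;> omega

lemma rhoD_sr_r (i j : ZMod (2 * t)) :
    rhoD t (sr i) (r j) = if j.val ≤ (-i).val then 1 else -1 := by
  have := ZMod.val_lt (-i); have := ZMod.val_lt j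
  simp only [rhoD, dihIdx, rhoIdxD]
  split_ifs <;> omega

lemma rhoD_sr_sr (i j : ZMod (2 * t)) :
    rhoD t (sr i) (sr j) = if (-j).val ≤ (-i).val then -1 else 1 := by
  have := ZMod.val_lt (-i); have := ZMod.val_lt (-j)
  simp only [rhoD, dihIdx, rhoIdxD]
  split_ifs <;> omega

lemma rhoD_cocycle (g h k : DihedralGroup (2 * t)) :
    rhoD t g h * rhoD t (g * h) k = rhoD t h k * rhoD t g (h * k) := by
  -- Linear arithmetic on representatives in `[0, 2t)`; `val_add_cases` records whether a sum wraps.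
  obtain ⟨i⟩ | ⟨i⟩ := g <;> obtain ⟨j⟩ | ⟨j⟩ := h <;> obtain ⟨l⟩ | ⟨l⟩ := k <;>
    simp only [r_mul_r, r_mul_sr, sr_mul_r, sr_mul_sr, rhoD_r_r, rhoD_r_sr, rhoD_sr_r,
      rhoD_sr_sr, sub_eq_add_neg, neg_add_rev, neg_neg] <;>
    have := ZMod.val_lt i <;> have := ZMod.val_lt j <;> have := ZMod.val_lt l <;>
    have := ZMod.val_neg_cases i <;> have := ZMod.val_neg_cases j <;>
    have := ZMod.val_neg_cases l <;>
    have := ZMod.val_lt (-i) <;> have := ZMod.val_lt (-j) <;> have := ZMod.val_lt (-l)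
  case r.r.r =>
    have := ZMod.val_add_cases i j; have := ZMod.val_add_cases j l
    have := ZMod.val_lt (i + j); have := ZMod.val_lt (j + l)
    split_ifs <;> omega
  case r.r.sr =>
    have := ZMod.val_add_cases i j; have := ZMod.val_add_cases j (-l)
    have := ZMod.val_lt (i + j); have := ZMod.val_lt (j + -l)
    split_ifs <;> omega
  case r.sr.r =>
    have := ZMod.val_add_cases i (-j); have := ZMod.val_add_cases (-l) (-j)
    have := ZMod.val_lt (i + -j); have := ZMod.val_lt (-l + -j)
    split_ifs <;> omega
  case r.sr.sr =>
    have := ZMod.val_add_cases i (-j); have := ZMod.val_add_cases l (-j)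
    have := ZMod.val_lt (i + -j); have := ZMod.val_lt (l + -j)
    split_ifs <;> omega
  case sr.r.r =>
    have := ZMod.val_add_cases (-j) (-i); have := ZMod.val_add_cases j l
    have := ZMod.val_lt (-j + -i); have := ZMod.val_lt (j + l)
    split_ifs <;> omega
  case sr.r.sr =>
    have := ZMod.val_add_cases (-j) (-i); have := ZMod.val_add_cases (-l) (-j)
    have := ZMod.val_add_cases j (-l)
    have := ZMod.val_lt (-j + -i); have := ZMod.val_lt (-l + -j); have := ZMod.val_lt (j + -l)
    split_ifs <;> omega
  case sr.sr.r =>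
    have := ZMod.val_add_cases j (-i); have := ZMod.val_add_cases j l
    have := ZMod.val_add_cases (-l) (-j)
    have := ZMod.val_lt (j + -i); have := ZMod.val_lt (j + l); have := ZMod.val_lt (-l + -j)
    split_ifs <;> omega
  case sr.sr.sr =>
    have := ZMod.val_add_cases j (-i); have := ZMod.val_add_cases l (-j)
    have := ZMod.val_lt (j + -i); have := ZMod.val_lt (l + -j)
    split_ifs <;> omega

lemma isBinaryCocycle_rhoD : IsBinaryCocycle (rhoD t) where
  sign g h := by
    cases g <;> cases h <;>
      simp only [rhoD_r_r, rhoD_r_sr, rhoD_sr_r, rhoD_sr_sr] <;> split_ifs <;> simp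
  cocycle := rhoD_cocycle

lemma rhoD_sr_sr_add (i j : ZMod (2 * t)) :
    rhoD t (sr i) (sr (i + j)) = -rhoD t (sr i) (r j) := by
  rw [rhoD_sr_sr, rhoD_sr_r, neg_add]
  have := ZMod.val_add_cases (-i) (-j)
  have := ZMod.val_neg_cases i; have := ZMod.val_neg_cases j
  have := ZMod.val_lt (-i + -j); have := ZMod.val_lt (-i); have := ZMod.val_lt (-j)
  have := ZMod.val_lt i; have := ZMod.val_lt j
  split_ifs <;> omega

lemma rhoD_inv_mul {g : DihedralGroup (2 * t)} (hg : g ≠ 1) (h : DihedralGroup (2 * t)) :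
    rhoD t g⁻¹ (g * h) = -rhoD t g h := by
  rcases g with m | i
  · have hm : m.val ≠ 0 := fun h0 => hg (by rw [(ZMod.val_eq_zero m).mp h0, one_def])
    have := ZMod.val_neg_cases m; have := ZMod.val_lt m; have := ZMod.val_lt (-m)
    rcases h with j | j
    · rw [inv_r, r_mul_r, rhoD_r_r, rhoD_r_r]
      have := ZMod.val_add_cases m j; have := ZMod.val_lt (m + j); have := ZMod.val_lt j
      split_ifs <;> omega
    · rw [inv_r, r_mul_sr, rhoD_r_sr, rhoD_r_sr, show -(j - m) = m + -j by ring]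
      have := ZMod.val_add_cases m (-j); have := ZMod.val_lt (m + -j); have := ZMod.val_lt (-j)
      split_ifs <;> omega
  · rcases h with j | j
    · rw [inv_sr, sr_mul_r, rhoD_sr_sr_add]
    · have := rhoD_sr_sr_add i (j - i)
      rw [add_sub_cancel] at this
      rw [inv_sr, sr_mul_sr, this, neg_neg]

lemma dihEl_val_add_one (m : ZMod (2 * t)) : dihEl t (m.val + 1) = r m := by
  have := ZMod.val_lt m
  rw [dihEl, if_pos (by omega), Nat.add_sub_cancel, ZMod.natCast_zmod_val]

lemma dihEl_ne_one {s : ℕ} (h2 : 2 ≤ s) (hst : s ≤ t) : dihEl t s ≠ 1 := by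
  obtain ⟨m, rfl⟩ : ∃ m, s = m + 1 := ⟨s - 1, by omega⟩
  have hval : ((m : ℕ) : ZMod (2 * t)).val = m := ZMod.val_cast_of_lt (by omega)
  rw [← hval, dihEl_val_add_one, one_def]
  intro h
  rw [r.inj h, ZMod.val_zero] at hval
  omega

lemma exists_dihEl_eq_or_eq_inv {g : DihedralGroup (2 * t)} (hg : g ≠ 1) (hinv : g⁻¹ ≠ g) :
    ∃ s, 2 ≤ s ∧ s ≤ t ∧ (dihEl t s = g ∨ dihEl t s = g⁻¹) := by
  rcases g with m | i
  · have hm : m.val ≠ 0 := fun h0 => hg (by rw [(ZMod.val_eq_zero m).mp h0, one_def])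
    have hneg : (-m).val ≠ m.val := fun h => hinv (by rw [inv_r, ZMod.val_injective _ h])
    have := ZMod.val_neg_cases m; have := ZMod.val_lt m
    rcases Nat.lt_or_ge m.val t with hlt | hge
    · exact ⟨m.val + 1, by omega, by omega, Or.inl (dihEl_val_add_one m)⟩
    · exact ⟨(-m).val + 1, by omega, by omega, Or.inr (dihEl_val_add_one (-m))⟩
  · exact absurd (inv_sr i) hinv

theorem forall_twistedRowSum_rhoD_eq_zero_iff (f : DihedralGroup (2 * t) → ℤ) :
    (∀ g, g ≠ 1 → twistedRowSum (rhoD t) f g = 0) ↔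
      ∀ s, 2 ≤ s → s ≤ t → twistedRowSum (rhoD t) f (dihEl t s) = 0 := by
  refine ⟨fun h s h2 hst => h _ (dihEl_ne_one h2 hst), fun h g hg => ?_⟩
  by_cases hinv : g⁻¹ = g
  · exact twistedRowSum_eq_zero_of_inv_eq f (rhoD_inv_mul hg) hinv
  obtain ⟨s, h2, hst, e | e⟩ := exists_dihEl_eq_or_eq_inv hg hinv
  · rw [← e, h s h2 hst]
  · have := twistedRowSum_inv f (rhoD_inv_mul hg)
    rw [← e, h s h2 hst] at this
    omega

end DihedralGroup

section Variety

open DihedralGroup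

variable {t : ℕ} [NeZero (2 * t)] {a : {d : DihedralGroup (2 * t) // d ∈ SD t} → ℚ}

lemma eval_rowPolyD (ha : ∀ d, a d = 0 ∨ a d = 1) {s : ℕ} (hs : dihEl t s ≠ 1) :
    eval a (rowPolyD t s) = twistedRowSum (rhoD t) (charMapProd a) (dihEl t s) := by
  rw [rowPolyD, map_sum, twistedRowSum, Int.cast_sum]
  refine Finset.sum_congr rfl fun h _ => ?_
  rw [map_mul, eval_C, eval_prod_ite_or ha fun e => hs (right_eq_mul.mp e)]
  push_cast; rfl

lemma forall_mem_idealD_eval_eq_zero_iff :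
    (∀ p ∈ idealD t, eval a p = 0) ↔
      (∀ d, a d = 0 ∨ a d = 1) ∧ ∀ s, 2 ≤ s → s ≤ t → eval a (rowPolyD t s) = 0 := by
  change idealD t ≤ RingHom.ker (eval a) ↔ _
  rw [idealD, Ideal.span_le, Set.union_subset_iff]
  refine and_congr ⟨fun h d => ?_, fun h _ ⟨d, hd⟩ => ?_⟩ ⟨fun h s h2 hst => h ⟨s, h2, hst, rfl⟩,
    fun h _ ⟨s, h2, hst, hp⟩ => hp ▸ h s h2 hst⟩
  · have := h ⟨d, rfl⟩
    rwa [SetLike.mem_coe, RingHom.mem_ker, map_sub, map_pow, eval_X, sub_eq_zero, sq,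
      ← IsIdempotentElem, IsIdempotentElem.iff_eq_zero_or_one] at this
  · rw [hd, SetLike.mem_coe, RingHom.mem_ker, map_sub, map_pow, eval_X, sub_eq_zero, sq]
    exact IsIdempotentElem.iff_eq_zero_or_one.mpr (h d)

end Variety

theorem mem_variety_idealD_iff_general (t : ℕ) [NeZero (2 * t)]
    (a : {d : DihedralGroup (2 * t) // d ∈ SD t} → ℚ) :
    (∀ p ∈ idealD t, eval a p = 0) ↔
      (∀ d, a d = 0 ∨ a d = 1) ∧
      (Matrix.of fun g h : DihedralGroup (2 * t) =>
            rhoD t g h *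
              ∏ d : {d : DihedralGroup (2 * t) // d ∈ SD t},
                (if a d = 1 then elemCob (d : DihedralGroup (2 * t)) g h else 1)) *
          (Matrix.of fun g h : DihedralGroup (2 * t) =>
            rhoD t g h *
              ∏ d : {d : DihedralGroup (2 * t) // d ∈ SD t},
                (if a d = 1 then elemCob (d : DihedralGroup (2 * t)) g h else 1))ᵀ =
        (4 * t : ℤ) • (1 : Matrix (DihedralGroup (2 * t)) (DihedralGroup (2 * t)) ℤ) := by
  have hψ := DihedralGroup.isBinaryCocycle_rhoD.mul_prod_elemCob a
  have hcard : (4 * t : ℤ) = Fintype.card (DihedralGroup (2 * t)) := by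
    rw [DihedralGroup.card]; push_cast; ring
  rw [forall_mem_idealD_eval_eq_zero_iff, hcard, hψ.mul_transpose_eq_iff]
  refine and_congr_right fun ha => ?_
  simp_rw [prod_elemCob_eq, sum_mul_coboundary, mul_eq_zero, charMapProd_ne_zero, false_or,
    DihedralGroup.forall_twistedRowSum_rhoD_eq_zero_iff]
  refine forall₃_congr fun s h2 hst => ?_
  rw [eval_rowPolyD ha (DihedralGroup.dihEl_ne_one h2 hst), Int.cast_eq_zero]

/-- a point lies in `V(J_{D_{4t}})` iff it is a `{0,1}`-tuple whose
associated cocyclic matrix over `D_{4t}` is Hadamard. -/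
theorem mem_variety_idealD_iff (t : ℕ) [NeZero (2 * t)] (ht : 2 < t)
    (a : {d : DihedralGroup (2 * t) // d ∈ SD t} → ℚ) :
    (∀ p ∈ idealD t, eval a p = 0) ↔
      (∀ d, a d = 0 ∨ a d = 1) ∧
      (Matrix.of fun g h : DihedralGroup (2 * t) =>
            rhoD t g h *
              ∏ d : {d : DihedralGroup (2 * t) // d ∈ SD t},
                (if a d = 1 then elemCob (d : DihedralGroup (2 * t)) g h else 1)) *
          (Matrix.of fun g h : DihedralGroup (2 * t) =>
            rhoD t g h *
              ∏ d : {d : DihedralGroup (2 * t) // d ∈ SD t},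
                (if a d = 1 then elemCob (d : DihedralGroup (2 * t)) g h else 1))ᵀ =
        (4 * t : ℤ) • (1 : Matrix (DihedralGroup (2 * t)) (DihedralGroup (2 * t)) ℤ) :=
  mem_variety_idealD_iff_general t a
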